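/- arXiv:math/0611477 — 9 statements merged into one kernel-verified Lean document; each statement's English description precedes it below -/
import Mathlib

section
/- Combinatorial form of the Main Theorem (Theorem 1.5, via Lemma 4.1): let d ≥ 1 be an integer. Then ε(X) > d if and only if for every pair of functions e, e' : V → ℕ with Σ_{i∈V} e i = Σ_{i∈V} e' i = d and with e − e' ∈ Λ_X (i.e. the partitional multidegrees e and e' are equivalent), one has e − e' ∈ Λ_X^0. (This is exactly the combinatorial content of the statement 'X admits a natural d-th Abel map iff ε(X) > d'.) -/
open Finset

variable {V : Type*}

/-- The multidegree of a divisor `D` on the nodal curve with dual multigraph `m`: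
`(deg D) j = ∑ i, (D i - D j) * m i j`. -/
def mdeg [Fintype V] (m : V → V → ℕ) (D : V → ℤ) : V → ℤ :=
  fun j => ∑ i, (D i - D j) * (m i j : ℤ)

/-- `k_Z`: the number of nodes where the subcurve `Z` meets its complementary curve. -/
def kdeg [Fintype V] [DecidableEq V] (m : V → V → ℕ) (Z : Finset V) : ℕ :=
  ∑ i ∈ Z, ∑ j ∈ Zᶜ, m i j

/-- The pair `(i, j)` (with `m i j > 0`) corresponds to a separating node:
`m i j = 1` and the edge `{i, j}` is a bridge of `G`. -/
def Separating (m : V → V → ℕ) (G : SimpleGraph V) (i j : V) : Prop :=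
  m i j = 1 ∧ G.IsBridge s(i, j)

/-- A tail: a nonempty proper subcurve meeting its complement in a single node. -/
def IsTail [Fintype V] [DecidableEq V] (m : V → V → ℕ) (Q : Finset V) : Prop :=
  Q.Nonempty ∧ Q ≠ Finset.univ ∧ kdeg m Q = 1

/-- A divisor is a sum of tails if `D = c·1_V + ∑ h a_h · 1_{Q_h}` with the `Q_h` tails. -/
def SumOfTails [Fintype V] [DecidableEq V] (m : V → V → ℕ) (D : V → ℤ) : Prop :=
  ∃ (c : ℤ) (k : ℕ) (a : Fin k → ℤ) (Q : Fin k → Finset V),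
    (∀ h, IsTail m (Q h)) ∧
    ∀ i, D i = c + ∑ h, a h * (if i ∈ Q h then 1 else 0)

/-- `Λ_X`: the group of multidegrees of twisters, i.e. the image of `mdeg`. -/
def Lambda [Fintype V] (m : V → V → ℕ) : Set (V → ℤ) := Set.range (mdeg m)

/-- `Λ_X^0`: multidegrees of sums of tails. -/
def Lambda0 [Fintype V] [DecidableEq V] (m : V → V → ℕ) : Set (V → ℤ) :=
  {t | ∃ D, SumOfTails m D ∧ mdeg m D = t}

/-- The essential connectivity `ε(X)`: the infimum of `k_Z` over nonempty proper `Z ⊆ V`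
such that some pair `(i,j)` with `i ∈ Z`, `j ∉ Z`, `m i j > 0` is not separating. -/
noncomputable def eps [Fintype V] [DecidableEq V] (m : V → V → ℕ) (G : SimpleGraph V) : ℕ∞ :=
  sInf ((fun Z : Finset V => (kdeg m Z : ℕ∞)) ''
    {Z | Z.Nonempty ∧ Z ≠ Finset.univ ∧
      ∃ i ∈ Z, ∃ j, j ∉ Z ∧ 0 < m i j ∧ ¬ Separating m G i j})


/-!
If `ε(X) > d` and `deg D = e - e'` with `e, e' ≥ 0` of total degree `d`, then `D` is constant
across every non-separating node: otherwise the superlevel set `Z = {u | D v ≤ D u}` of a node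
`(v, w)` with `D w < D v` is crossed by it and has `k_Z ≤ -∑_{u ∈ Z} (deg D) u ≤ d`. Such a
divisor is a sum of tails, obtained by removing, one separating node at a time, a multiple of the
indicator of the tail that node cuts off.

Conversely, a subcurve `Z` with `k_Z ≤ d` crossed by a non-separating node `(i, j)` yields
equivalent partitional multidegrees differing by `deg 1_Z`. A sum of tails `D` with that
multidegree has `deg (D - 1_Z) = 0`, so `D - 1_Z` is constant along every edge (the Laplacian
quadratic form `∑ (E i - E j)² m i j` vanishes), whereas `D i = D j` and `1_Z i ≠ 1_Z j`.
-/

lemma sum_sum_eq_zero_of_antisymm (s : Finset V) {f : V → V → ℤ} (hf : ∀ i j, f i j = -f j i) :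
    ∑ i ∈ s, ∑ j ∈ s, f i j = 0 := by
  have h : ∑ i ∈ s, ∑ j ∈ s, f i j = -∑ i ∈ s, ∑ j ∈ s, f i j := by
    conv_lhs => rw [Finset.sum_comm]
    rw [← Finset.sum_neg_distrib]
    exact Finset.sum_congr rfl fun i _ => by
      rw [← Finset.sum_neg_distrib]; exact Finset.sum_congr rfl fun j _ => hf j i
  omega

section Laplacian

variable [Fintype V] {m : V → V → ℕ}

lemma mdeg_sub (D E : V → ℤ) : mdeg m (D - E) = mdeg m D - mdeg m E := by
  ext j
  simp only [mdeg, Pi.sub_apply, ← Finset.sum_sub_distrib]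
  exact Finset.sum_congr rfl fun i _ => by ring

lemma sum_sum_sq_sub_mul_eq (hsym : ∀ i j, m i j = m j i) (E : V → ℤ) :
    ∑ j, ∑ i, (E i - E j) ^ 2 * (m i j : ℤ) = -2 * ∑ j, E j * mdeg m E j := by
  have hanti : ∑ j, ∑ i, (E i ^ 2 - E j ^ 2) * (m i j : ℤ) = 0 :=
    sum_sum_eq_zero_of_antisymm univ fun j i => by rw [hsym]; ring
  simp only [mdeg, Finset.mul_sum]
  rw [← sub_eq_zero, ← hanti, ← Finset.sum_sub_distrib]
  refine Finset.sum_congr rfl fun j _ => ?_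
  rw [← Finset.sum_sub_distrib]
  exact Finset.sum_congr rfl fun i _ => by ring

lemma eq_of_mdeg_eq_zero (hsym : ∀ i j, m i j = m j i) {E : V → ℤ} (hE : mdeg m E = 0)
    {a b : V} (hab : 0 < m a b) : E a = E b := by
  have hnonneg : ∀ i j, 0 ≤ (E i - E j) ^ 2 * (m i j : ℤ) := fun i j => by positivity
  have hsum : ∑ j, ∑ i, (E i - E j) ^ 2 * (m i j : ℤ) = 0 := by
    simp [sum_sum_sq_sub_mul_eq hsym, hE]
  have hterm : (E a - E b) ^ 2 * (m a b : ℤ) = 0 := by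
    rw [Finset.sum_eq_zero_iff_of_nonneg fun j _ => Finset.sum_nonneg fun i _ => hnonneg i j]
      at hsum
    exact (Finset.sum_eq_zero_iff_of_nonneg fun i _ => hnonneg i b).1 (hsum b (mem_univ b)) a
      (mem_univ a)
  have : (m a b : ℤ) ≠ 0 := by exact_mod_cast hab.ne'
  have := sq_eq_zero_iff.1 ((mul_eq_zero.1 hterm).resolve_right this)
  omega

lemma neg_le_sum_sub {e e' : V → ℕ} {d : ℕ} (he' : ∑ i, e' i = d) (Z : Finset V) :
    -(d : ℤ) ≤ ∑ u ∈ Z, ((e u : ℤ) - e' u) := by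
  have h : ∑ u ∈ Z, (e' u : ℤ) ≤ d := by
    rw [← he', Nat.cast_sum]
    exact Finset.sum_le_sum_of_subset_of_nonneg (subset_univ Z) fun _ _ _ => by positivity
  rw [Finset.sum_sub_distrib]
  have : 0 ≤ ∑ u ∈ Z, (e u : ℤ) := by positivity
  omega

variable [DecidableEq V]

lemma mdeg_indicator (Z : Finset V) (v : V) :
    mdeg m (fun u => if u ∈ Z then 1 else 0) v =
      ((if v ∈ Z then 0 else ∑ i ∈ Z, m i v : ℕ) : ℤ) -
        (if v ∈ Z then ∑ i ∈ Zᶜ, m i v else 0 : ℕ) := by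
  by_cases hv : v ∈ Z
  · simp only [mdeg, hv, if_true, Nat.cast_zero, zero_sub, Nat.cast_sum]
    rw [← Fintype.sum_ite_mem Zᶜ, ← Finset.sum_neg_distrib]
    exact Finset.sum_congr rfl fun i _ => by by_cases hi : i ∈ Z <;> simp [hi]
  · simp [mdeg, hv]

/-- `e` (resp. `e'`) gives each component outside (resp. inside) `Z` its number of nodes on the
other side, so both have degree `k_Z`; the slack `d - k_Z` is added to both at `v₀`. -/
lemma exists_partitional_eq_mdeg_indicator (hsym : ∀ i j, m i j = m j i) {Z : Finset V} {d : ℕ}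
    (hZ : kdeg m Z ≤ d) (v₀ : V) : ∃ e e' : V → ℕ, ∑ i, e i = d ∧ ∑ i, e' i = d ∧
      (fun i => (e i : ℤ) - e' i) = mdeg m fun u => if u ∈ Z then 1 else 0 := by
  set pad : V → ℕ := Pi.single v₀ (d - kdeg m Z)
  have hpad : ∑ i, pad i = d - kdeg m Z := by simp [pad]
  refine ⟨fun v => (if v ∈ Z then 0 else ∑ i ∈ Z, m i v) + pad v,
    fun v => (if v ∈ Z then ∑ i ∈ Zᶜ, m i v else 0) + pad v, ?_, ?_, ?_⟩
  · have hout : ∑ v, (if v ∈ Z then 0 else ∑ i ∈ Z, m i v) = kdeg m Z := by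
      rw [kdeg, Finset.sum_comm, ← Fintype.sum_ite_mem Zᶜ]
      exact Finset.sum_congr rfl fun v _ => by by_cases hv : v ∈ Z <;> simp [hv]
    rw [Finset.sum_add_distrib, hpad, hout]
    omega
  · have hin : ∑ v, (if v ∈ Z then ∑ i ∈ Zᶜ, m i v else 0) = kdeg m Z := by
      rw [Fintype.sum_ite_mem, kdeg]
      exact Finset.sum_congr rfl fun v _ => Finset.sum_congr rfl fun i _ => hsym i v
    rw [Finset.sum_add_distrib, hpad, hin]
    omega
  · ext v
    rw [mdeg_indicator]
    push_cast
    ring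

lemma sum_mdeg_eq_sum_boundary (hsym : ∀ i j, m i j = m j i) (D : V → ℤ) (Z : Finset V) :
    ∑ u ∈ Z, mdeg m D u = ∑ u ∈ Z, ∑ i ∈ Zᶜ, (D i - D u) * (m i u : ℤ) := by
  have hinner : ∑ u ∈ Z, ∑ i ∈ Z, (D i - D u) * (m i u : ℤ) = 0 :=
    sum_sum_eq_zero_of_antisymm Z fun u i => by rw [hsym]; ring
  simp only [mdeg, ← Finset.sum_add_sum_compl Z, Finset.sum_add_distrib, hinner, zero_add]

lemma kdeg_le_neg_sum_mdeg (hsym : ∀ i j, m i j = m j i) {D : V → ℤ} {Z : Finset V}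
    (hZ : ∀ u ∈ Z, ∀ i ∉ Z, D i < D u) : (kdeg m Z : ℤ) ≤ -∑ u ∈ Z, mdeg m D u := by
  rw [sum_mdeg_eq_sum_boundary hsym, kdeg, ← Finset.sum_neg_distrib]
  push_cast
  refine Finset.sum_le_sum fun u hu => ?_
  rw [← Finset.sum_neg_distrib]
  refine Finset.sum_le_sum fun i hi => ?_
  have : D i - D u ≤ -1 := by have := hZ u hu i (Finset.mem_compl.1 hi); omega
  rw [hsym u i]
  nlinarith [(m i u).cast_nonneg (α := ℤ)]

end Laplacian

lemma Separating.symm {m : V → V → ℕ} {G : SimpleGraph V} (hsym : ∀ i j, m i j = m j i)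
    {i j : V} (h : Separating m G i j) : Separating m G j i :=
  ⟨(hsym j i).trans h.1, Sym2.eq_swap ▸ h.2⟩

lemma SimpleGraph.Reachable.eq_of_forall_adj {α : Type*} {G : SimpleGraph V} {f : V → α}
    (hf : ∀ v w, G.Adj v w → f v = f w) {u v : V} (huv : G.Reachable u v) : f u = f v := by
  rw [SimpleGraph.reachable_iff_reflTransGen] at huv
  induction huv with
  | refl => rfl
  | tail _ hab ih => exact ih.trans (hf _ _ hab)

section Tails

variable [Fintype V] [DecidableEq V] {m : V → V → ℕ} {G : SimpleGraph V}

lemma kdeg_eq_sum_product (Q : Finset V) :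
    kdeg m Q = ∑ p ∈ Q ×ˢ Qᶜ, m p.1 p.2 := by
  rw [kdeg, Finset.sum_product]

lemma IsTail.crossing_unique {Q : Finset V} (hQ : IsTail m Q) {a b v w : V} (ha : a ∈ Q)
    (hb : b ∉ Q) (hab : 0 < m a b) (hv : v ∈ Q) (hw : w ∉ Q) (hvw : 0 < m v w) :
    (v, w) = (a, b) := by
  by_contra hne
  have hsub : ({(v, w), (a, b)} : Finset (V × V)) ⊆ Q ×ˢ Qᶜ := by
    simp [Finset.insert_subset_iff, ha, hb, hv, hw]
  have := Finset.sum_le_sum_of_subset (f := fun p : V × V => m p.1 p.2) hsub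
  rw [Finset.sum_pair hne, ← kdeg_eq_sum_product, hQ.2.2] at this
  dsimp only at this
  omega

lemma IsTail.mem_iff_mem (hsym : ∀ i j, m i j = m j i) {Q : Finset V} (hQ : IsTail m Q)
    {a b v w : V} (ha : a ∈ Q) (hb : b ∉ Q) (hab : 0 < m a b) (hvw : 0 < m v w)
    (h₁ : (v, w) ≠ (a, b)) (h₂ : (v, w) ≠ (b, a)) : v ∈ Q ↔ w ∈ Q := by
  constructor
  · intro hv
    by_contra hw
    exact h₁ (hQ.crossing_unique ha hb hab hv hw hvw)
  · intro hw
    by_contra hv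
    obtain ⟨rfl, rfl⟩ := Prod.mk.inj (hQ.crossing_unique ha hb hab hw hv (hsym v w ▸ hvw))
    exact h₂ rfl

lemma IsTail.separating (hG : ∀ i j, G.Adj i j ↔ i ≠ j ∧ 0 < m i j) {Q : Finset V}
    (hQ : IsTail m Q) {a b : V} (ha : a ∈ Q) (hb : b ∉ Q) (hab : 0 < m a b) :
    Separating m G a b := by
  have hle : m a b ≤ kdeg m Q := by
    rw [kdeg_eq_sum_product]
    exact Finset.single_le_sum (f := fun p : V × V => m p.1 p.2) (fun _ _ => Nat.zero_le _)
      (a := (a, b)) (by simp [ha, hb])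
  refine ⟨by have := hQ.2.2; omega, SimpleGraph.isBridge_iff.2 fun ⟨p⟩ => ?_⟩
  obtain ⟨d, -, hd, hd'⟩ := p.exists_boundary_dart Q ha hb
  obtain ⟨hGd, hde⟩ := SimpleGraph.deleteEdges_adj.1 d.adj
  obtain ⟨h₁, h₂⟩ := Prod.mk.inj (hQ.crossing_unique ha hb hab hd hd' ((hG _ _).1 hGd).2)
  exact hde (by rw [h₁, h₂]; rfl)

lemma exists_tail_of_separating (hG : ∀ i j, G.Adj i j ↔ i ≠ j ∧ 0 < m i j) {i j : V}
    (hij : Separating m G i j) : ∃ Q, IsTail m Q ∧ i ∈ Q ∧ j ∉ Q := by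
  classical
  set Q := univ.filter ((G.deleteEdges {s(i, j)}).Reachable i)
  have hi : i ∈ Q := by simp [Q]
  have hj : j ∉ Q := by simpa [Q] using SimpleGraph.isBridge_iff.1 hij.2
  have hcross : ∀ v ∈ Q, ∀ w ∉ Q, 0 < m v w → (v, w) = (i, j) := by
    intro v hv w hw hvw
    have hne : v ≠ w := by rintro rfl; exact hw hv
    simp only [Q, mem_filter, mem_univ, true_and] at hv hw
    by_cases hedge : s(v, w) = s(i, j)
    · rcases Sym2.eq_iff.1 hedge with ⟨rfl, rfl⟩ | ⟨rfl, rfl⟩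
      · rfl
      · exact absurd hv hij.2
    · exact absurd (hv.trans (SimpleGraph.deleteEdges_adj.2
        ⟨(hG v w).2 ⟨hne, hvw⟩, by simpa using hedge⟩).reachable) hw
  refine ⟨Q, ⟨⟨i, hi⟩, fun h => hj (h ▸ mem_univ j), ?_⟩, hi, hj⟩
  rw [kdeg_eq_sum_product, Finset.sum_eq_single_of_mem (i, j) (by simp [hi, hj]), hij.1]
  rintro ⟨v, w⟩ hp hne
  simp only [mem_product, mem_compl] at hp
  by_contra hvw
  exact hne (hcross v hp.1 w hp.2 (Nat.pos_of_ne_zero hvw))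

end Tails

section SumOfTails

variable [Fintype V] [DecidableEq V] {m : V → V → ℕ} {G : SimpleGraph V}

lemma SumOfTails.const (m : V → V → ℕ) (c : ℤ) : SumOfTails m fun _ => c :=
  ⟨c, 0, Fin.elim0, Fin.elim0, fun h => h.elim0, fun _ => by simp⟩

lemma SumOfTails.add_mul_indicator {D : V → ℤ} (hD : SumOfTails m D) {Q : Finset V}
    (hQ : IsTail m Q) (a : ℤ) : SumOfTails m fun v => D v + a * if v ∈ Q then 1 else 0 := by
  obtain ⟨c, k, coeff, T, hT, hDT⟩ := hD
  refine ⟨c, k + 1, Fin.snoc coeff a, Fin.snoc T Q, fun h => ?_, fun v => ?_⟩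
  · induction h using Fin.lastCases with
    | last => simpa using hQ
    | cast h => simpa using hT h
  · simp [Fin.sum_univ_castSucc, hDT v, add_assoc]

lemma SumOfTails.eq_of_not_separating (hsym : ∀ i j, m i j = m j i)
    (hG : ∀ i j, G.Adj i j ↔ i ≠ j ∧ 0 < m i j) {D : V → ℤ} (hD : SumOfTails m D) {a b : V}
    (hab : 0 < m a b) (hns : ¬ Separating m G a b) : D a = D b := by
  obtain ⟨c, k, coeff, T, hT, hDT⟩ := hD
  have hmem : ∀ h, a ∈ T h ↔ b ∈ T h := fun h => by
    constructor
    · intro ha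
      by_contra hb
      exact hns ((hT h).separating hG ha hb hab)
    · intro hb
      by_contra ha
      exact hns (((hT h).separating hG hb ha (hsym a b ▸ hab)).symm hsym)
  simp only [hDT, hmem]

theorem sumOfTails_of_eq_of_not_separating (hsym : ∀ i j, m i j = m j i)
    (hG : ∀ i j, G.Adj i j ↔ i ≠ j ∧ 0 < m i j) (hconn : G.Connected) {D : V → ℤ}
    (hD : ∀ v w, 0 < m v w → ¬ Separating m G v w → D v = D w) : SumOfTails m D := by
  classical
  suffices h : ∀ S : Finset (V × V), (∀ p ∈ S, Separating m G p.1 p.2) → ∀ D : V → ℤ,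
      (∀ v w, 0 < m v w → (v, w) ∉ S → D v = D w) → SumOfTails m D from
    h (univ.filter fun p => Separating m G p.1 p.2) (by simp) D
      fun v w hvw hS => hD v w hvw (by simpa using hS)
  intro S
  induction S using Finset.induction_on with
  | empty =>
    intro _ D hD
    obtain ⟨v₀⟩ := hconn.nonempty
    have hconst : D = fun _ => D v₀ := funext fun v =>
      (hconn v v₀).eq_of_forall_adj fun v w hvw => hD v w ((hG v w).1 hvw).2 (notMem_empty _)
    exact hconst ▸ SumOfTails.const m (D v₀)
  | insert p S hp ih =>
    obtain ⟨i, j⟩ := p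
    intro hS D hD
    have hij := hS (i, j) (mem_insert_self _ _)
    obtain ⟨Q, hQ, hi, hj⟩ := exists_tail_of_separating hG hij
    set D' : V → ℤ := fun v => D v - (D i - D j) * if v ∈ Q then 1 else 0
    have hD'i : D' i = D j := by simp [D', hi]
    have hD'j : D' j = D j := by simp [D', hj]
    have hD' : SumOfTails m D' := by
      refine ih (fun q hq => hS q (mem_insert_of_mem hq)) D' fun v w hvw hvwS => ?_
      by_cases h₁ : (v, w) = (i, j)
      · obtain ⟨rfl, rfl⟩ := Prod.mk.inj h₁
        rw [hD'i, hD'j]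
      by_cases h₂ : (v, w) = (j, i)
      · obtain ⟨rfl, rfl⟩ := Prod.mk.inj h₂
        rw [hD'i, hD'j]
      have hQvw := hQ.mem_iff_mem hsym hi hj (by rw [hij.1]; exact one_pos) hvw h₁ h₂
      simp only [D', hD v w hvw (by simp [h₁, hvwS]), hQvw]
    simpa [D'] using hD'.add_mul_indicator hQ (D i - D j)

end SumOfTails

section EssentialConnectivity

variable [Fintype V] [DecidableEq V] {m : V → V → ℕ} {G : SimpleGraph V}

lemma lt_eps_iff (d : ℕ) : (d : ℕ∞) < eps m G ↔ ∀ Z : Finset V, ∀ i ∈ Z, ∀ j ∉ Z,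
    0 < m i j → ¬ Separating m G i j → d < kdeg m Z := by
  rw [← ENat.add_one_le_iff (ENat.natCast_ne_top d), eps, le_sInf_iff, Set.forall_mem_image]
  refine forall_congr' fun Z => ⟨fun h i hi j hj hij hns => ?_, ?_⟩
  · exact_mod_cast h ⟨⟨i, hi⟩, fun hZ => hj (hZ ▸ mem_univ j), i, hi, j, hj, hij, hns⟩
  · rintro h ⟨-, -, i, hi, j, hj, hij, hns⟩
    exact_mod_cast h i hi j hj hij hns

lemma eq_of_not_separating_of_lt_eps (hsym : ∀ i j, m i j = m j i) {d : ℕ}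
    (hε : (d : ℕ∞) < eps m G) {D : V → ℤ} (hD : ∀ Z : Finset V, -(d : ℤ) ≤ ∑ u ∈ Z, mdeg m D u)
    {v w : V} (hvw : 0 < m v w) (hns : ¬ Separating m G v w) : D v = D w := by
  have key : ∀ v w, 0 < m v w → ¬ Separating m G v w → D v ≤ D w := by
    intro v w hvw hns
    by_contra! hlt
    set Z := univ.filter (D v ≤ D ·)
    have hZ : ∀ u ∈ Z, ∀ i ∉ Z, D i < D u := by
      intro u hu i hi
      simp only [Z, mem_filter, mem_univ, true_and] at hu hi
      omega
    have hk := (lt_eps_iff d).1 hε Z v (by simp [Z]) w (by simp [Z, hlt]) hvw hns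
    have := kdeg_le_neg_sum_mdeg hsym hZ
    have := hD Z
    omega
  exact le_antisymm (key v w hvw hns) (key w v (hsym v w ▸ hvw) fun h => hns (h.symm hsym))

end EssentialConnectivity

theorem main_theorem_combinatorial_general [Fintype V] [DecidableEq V]
    (m : V → V → ℕ) (hsym : ∀ i j, m i j = m j i)
    (G : SimpleGraph V) (hG : ∀ i j, G.Adj i j ↔ i ≠ j ∧ 0 < m i j)
    (hconn : G.Connected) (d : ℕ) :
    (d : ℕ∞) < eps m G ↔
      ∀ e e' : V → ℕ, (∑ i, e i) = d → (∑ i, e' i) = d →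
        (fun i => (e i : ℤ) - (e' i : ℤ)) ∈ Lambda m →
        (fun i => (e i : ℤ) - (e' i : ℤ)) ∈ Lambda0 m := by
  constructor
  · rintro hε e e' - he' ⟨D, hD⟩
    refine ⟨D, sumOfTails_of_eq_of_not_separating hsym hG hconn fun v w =>
      eq_of_not_separating_of_lt_eps hsym hε fun Z => ?_, hD⟩
    rw [hD]
    exact neg_le_sum_sub he' Z
  · intro h
    by_contra hε
    obtain ⟨Z, i, hi, j, hj, hij, hns, hZ⟩ : ∃ Z : Finset V, ∃ i ∈ Z, ∃ j ∉ Z,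
        0 < m i j ∧ ¬ Separating m G i j ∧ kdeg m Z ≤ d := by
      simpa [lt_eps_iff] using hε
    obtain ⟨e, e', he, he', hZe⟩ := exists_partitional_eq_mdeg_indicator hsym hZ i
    obtain ⟨D, hDt, hD⟩ := h e e' he he' ⟨_, hZe.symm⟩
    have h₁ := eq_of_mdeg_eq_zero hsym (E := D - fun u => if u ∈ Z then 1 else 0)
      (by rw [mdeg_sub, hD, hZe, sub_self]) hij
    have h₂ := hDt.eq_of_not_separating hsym hG hij hns
    simp only [Pi.sub_apply, hi, hj, if_true, if_false] at h₁
    omega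

/-- Combinatorial form of the Main Theorem (Theorem 1.5, via Lemma 4.1):
`ε(X) > d` iff any two equivalent partitional multidegrees of total degree `d`
differ by the multidegree of a sum of tails. -/
theorem main_theorem_combinatorial [Fintype V] [DecidableEq V] [Nonempty V]
    (m : V → V → ℕ) (hsym : ∀ i j, m i j = m j i) (hdiag : ∀ i, m i i = 0)
    (G : SimpleGraph V) (hG : ∀ i j, G.Adj i j ↔ i ≠ j ∧ 0 < m i j)
    (hconn : G.Connected) (d : ℕ) (hd : 1 ≤ d) :
    (d : ℕ∞) < eps m G ↔
      ∀ e e' : V → ℕ, (∑ i, e i) = d → (∑ i, e' i) = d →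
        (fun i => (e i : ℤ) - (e' i : ℤ)) ∈ Lambda m →
        (fun i => (e i : ℤ) - (e' i : ℤ)) ∈ Lambda0 m :=
  main_theorem_combinatorial_general m hsym G hG hconn d
end

section
/- Statement (•) in the proof of the Main Theorem: let d ≥ 1 be an integer and assume ε(X) > d. Suppose D : V → ℤ is a divisor whose multidegree satisfies deg D = e − e' for some e, e' : V → ℕ with Σ_{i∈V} e i = Σ_{i∈V} e' i = d. Then every pair (i, j) with m i j > 0 and D i ≠ D j is separating (i.e. the set S(deg D) of nodes joining components with different coefficients consists of separating nodes of X). -/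
open Finset

variable {V : Type*}

/-- Statement (•) in the proof of the Main Theorem: if `ε(X) > d` and the multidegree of `D`
is a difference of two partitional multidegrees of total degree `d`, then every node joining
components with different coefficients of `D` is separating. -/
theorem bullet_statement [Fintype V] [DecidableEq V] [Nonempty V]
    (m : V → V → ℕ) (hsym : ∀ i j, m i j = m j i) (hdiag : ∀ i, m i i = 0)
    (G : SimpleGraph V) (hG : ∀ i j, G.Adj i j ↔ i ≠ j ∧ 0 < m i j)
    (hconn : G.Connected) (d : ℕ) (hd : 1 ≤ d) (heps : (d : ℕ∞) < eps m G)
    (D : V → ℤ) (e e' : V → ℕ) (he : (∑ i, e i) = d) (he' : (∑ i, e' i) = d)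
    (hdeg : mdeg m D = fun i => (e i : ℤ) - (e' i : ℤ)) :
    ∀ i j, 0 < m i j → D i ≠ D j → Separating m G i j := by
  have key : ∀ i0 j0, 0 < m i0 j0 → D j0 < D i0 → Separating m G i0 j0 := by
    intro i0 j0 hm0 hlt
    by_contra hnot
    set Z : Finset V := univ.filter (fun i => D i0 ≤ D i) with hZ
    have hi0Z : i0 ∈ Z := by simp [hZ]
    have hj0Z : j0 ∉ Z := by simp [hZ]; omega
    -- the diagonal (Z × Z) part of the sum vanishes by antisymmetry
    have hsum0 : ∑ j ∈ Z, ∑ i ∈ Z, (D i - D j) * (m i j : ℤ) = 0 := by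
      have h1 : ∑ j ∈ Z, ∑ i ∈ Z, (D i - D j) * (m i j : ℤ)
          = ∑ j ∈ Z, ∑ i ∈ Z, -((D i - D j) * (m i j : ℤ)) := by
        rw [Finset.sum_comm]
        refine Finset.sum_congr rfl fun a _ => Finset.sum_congr rfl fun b _ => ?_
        rw [hsym b a]; ring
      have h2 : ∑ j ∈ Z, ∑ i ∈ Z, -((D i - D j) * (m i j : ℤ))
          = -∑ j ∈ Z, ∑ i ∈ Z, (D i - D j) * (m i j : ℤ) := by
        simp [Finset.sum_neg_distrib]
      linarith [h1.trans h2]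
    -- the crossing part is at most -k_Z
    have hcross : ∑ j ∈ Z, ∑ i ∈ Zᶜ, (D i - D j) * (m i j : ℤ) ≤ -(kdeg m Z : ℤ) := by
      have hkd : (kdeg m Z : ℤ) = ∑ j ∈ Z, ∑ i ∈ Zᶜ, (m i j : ℤ) := by
        unfold kdeg
        push_cast
        refine Finset.sum_congr rfl fun a _ => Finset.sum_congr rfl fun b _ => ?_
        rw [hsym a b]
      rw [hkd, ← Finset.sum_neg_distrib]
      refine Finset.sum_le_sum fun j hj => ?_
      rw [← Finset.sum_neg_distrib]
      refine Finset.sum_le_sum fun i hi => ?_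
      have hjZ : D i0 ≤ D j := by simpa [hZ] using hj
      have hiZ : ¬ D i0 ≤ D i := by simpa [hZ] using hi
      have h1 : D i - D j ≤ -1 := by omega
      nlinarith [Int.natCast_nonneg (m i j)]
    -- sum of multidegrees over Z
    have hmd : ∑ j ∈ Z, mdeg m D j ≤ -(kdeg m Z : ℤ) := by
      have : ∀ j, mdeg m D j = (∑ i ∈ Z, (D i - D j) * (m i j : ℤ))
          + ∑ i ∈ Zᶜ, (D i - D j) * (m i j : ℤ) := by
        intro j
        rw [mdeg, Finset.sum_add_sum_compl]
      rw [Finset.sum_congr rfl fun j _ => this j, Finset.sum_add_distrib, hsum0, zero_add]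
      exact hcross
    have hlow : -(d : ℤ) ≤ ∑ j ∈ Z, mdeg m D j := by
      rw [hdeg]
      have h1 : ∑ j ∈ Z, ((e j : ℤ) - (e' j : ℤ)) ≥ -∑ j ∈ Z, (e' j : ℤ) := by
        have : (0:ℤ) ≤ ∑ j ∈ Z, (e j : ℤ) :=
          Finset.sum_nonneg fun j _ => Int.natCast_nonneg _
        rw [Finset.sum_sub_distrib]
        linarith
      have h2 : ∑ j ∈ Z, (e' j : ℤ) ≤ (d : ℤ) := by
        rw [← he']
        push_cast
        exact Finset.sum_le_sum_of_subset_of_nonneg (Finset.subset_univ Z)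
          (fun j _ _ => Int.natCast_nonneg _)
      linarith
    have hkle : kdeg m Z ≤ d := by
      have : (kdeg m Z : ℤ) ≤ (d : ℤ) := by linarith
      exact_mod_cast this
    -- Z witnesses eps ≤ k_Z ≤ d, contradiction
    have hmem : (kdeg m Z : ℕ∞) ∈ ((fun Z : Finset V => (kdeg m Z : ℕ∞)) ''
        {Z | Z.Nonempty ∧ Z ≠ Finset.univ ∧
          ∃ i ∈ Z, ∃ j, j ∉ Z ∧ 0 < m i j ∧ ¬ Separating m G i j}) :=
      ⟨Z, ⟨⟨i0, hi0Z⟩, fun h => hj0Z (h ▸ Finset.mem_univ j0),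
        i0, hi0Z, j0, hj0Z, hm0, hnot⟩, rfl⟩
    have heps_le : eps m G ≤ (kdeg m Z : ℕ∞) := sInf_le hmem
    have : eps m G ≤ (d : ℕ∞) := heps_le.trans (by exact_mod_cast hkle)
    exact absurd (lt_of_lt_of_le heps this) (lt_irrefl _)
  intro i j hm hne
  rcases lt_or_gt_of_ne hne with h | h
  · have := key j i (by rw [hsym j i]; exact hm) h
    exact ⟨by rw [hsym]; exact this.1, by rw [Sym2.eq_swap]; exact this.2⟩
  · exact key i j hm h
end

section
/- Construction in the converse half of the Main Theorem: let d ≥ 1 be an integer and let Z ⊆ V be a nonempty proper subset with k_Z ≤ d. Then there exist e, e' : V → ℕ with Σ_{i∈V} e i = Σ_{i∈V} e' i = d such that e − e' = deg(1_Z), where 1_Z is the indicator function of Z. (In particular the multidegree of the subcurve Z is a difference of two equivalent partitional multidegrees of total degree d.) -/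
open Finset

variable {V : Type*}

/-- Converse half of the Main Theorem: if `k_Z ≤ d` then `deg 1_Z` is a difference of two
equivalent partitional multidegrees of total degree `d`. -/
theorem converse_construction [Fintype V] [DecidableEq V] [Nonempty V]
    (m : V → V → ℕ) (hsym : ∀ i j, m i j = m j i) (hdiag : ∀ i, m i i = 0)
    (G : SimpleGraph V) (hG : ∀ i j, G.Adj i j ↔ i ≠ j ∧ 0 < m i j)
    (hconn : G.Connected) (d : ℕ) (hd : 1 ≤ d)
    (Z : Finset V) (hZne : Z.Nonempty) (hZu : Z ≠ Finset.univ) (hk : kdeg m Z ≤ d) :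
    ∃ e e' : V → ℕ, (∑ i, e i) = d ∧ (∑ i, e' i) = d ∧
      (fun i => (e i : ℤ) - (e' i : ℤ)) = mdeg m (fun i => if i ∈ Z then 1 else 0) := by
  simp only [mdeg, kdeg] at hk ⊢
  classical
  obtain ⟨v⟩ := ‹Nonempty V›
  set k := ∑ i ∈ Z, ∑ j ∈ Zᶜ, m i j with hkdef
  refine ⟨fun j => (if j ∈ Z then 0 else ∑ i ∈ Z, m i j) + (if j = v then d - k else 0),
          fun j => (if j ∈ Z then ∑ i ∈ Zᶜ, m i j else 0) + (if j = v then d - k else 0), ?_, ?_, ?_⟩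
  · rw [Finset.sum_add_distrib]
    have h1 : ∑ j, (if j ∈ Z then 0 else ∑ i ∈ Z, m i j) = k := by
      rw [← Finset.sum_compl_add_sum Z,
        Finset.sum_congr rfl (fun j hj => if_neg (by simpa using hj)),
        Finset.sum_congr rfl (fun j hj => if_pos hj), Finset.sum_const_zero, add_zero,
        hkdef, Finset.sum_comm]
    have h2 : ∑ j : V, (if j = v then d - k else 0) = d - k := by simp
    rw [h1, h2]; omega
  · rw [Finset.sum_add_distrib]
    have h1 : ∑ j, (if j ∈ Z then ∑ i ∈ Zᶜ, m i j else 0) = k := by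
      rw [← Finset.sum_compl_add_sum Z,
        Finset.sum_congr rfl (fun j hj => if_neg (by simpa using hj)),
        Finset.sum_congr rfl (fun j hj => if_pos hj), Finset.sum_const_zero, zero_add,
        hkdef]
      exact Finset.sum_congr rfl fun j _ => Finset.sum_congr rfl fun i _ => hsym i j
    have h2 : ∑ j : V, (if j = v then d - k else 0) = d - k := by simp
    rw [h1, h2]; omega
  · funext j
    simp only [mdeg]
    have hA : ∑ i, ((if i ∈ Z then (1:ℤ) else 0) - (if j ∈ Z then 1 else 0)) * (m i j : ℤ)
        = (if j ∈ Z then -(∑ i ∈ Zᶜ, (m i j : ℤ)) else ∑ i ∈ Z, (m i j : ℤ)) := by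
      by_cases hj : j ∈ Z
      · simp only [hj, if_true]
        rw [← Finset.sum_compl_add_sum Z,
          Finset.sum_congr rfl (fun i hi => by rw [if_neg (by simpa using hi)]),
          Finset.sum_congr rfl (fun i (hi : i ∈ Z) => by rw [if_pos hi])]
        simp
      · simp only [hj, if_false]
        rw [← Finset.sum_compl_add_sum Z,
          Finset.sum_congr rfl (fun i hi => by rw [if_neg (by simpa using hi)]),
          Finset.sum_congr rfl (fun i (hi : i ∈ Z) => by rw [if_pos hi])]
        simp
    rw [hA]
    push_cast
    by_cases hj : j ∈ Z <;> simp only [hj, if_true, if_false] <;> ring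
end

section
/- Key step in the proof of Lemma 3.9: let Z ⊆ V be a nonempty proper subset such that the subgraph of G induced on Z is connected, and assume that every pair (i, j) with i ∈ Z, j ∉ Z and m i j > 0 is separating. Then either Z or its complement V∖Z is a disjoint union of tails; that is, there exist pairwise disjoint tails Q_1, …, Q_k with Z = Q_1 ∪ … ∪ Q_k, or there exist pairwise disjoint tails Q_1, …, Q_k with V∖Z = Q_1 ∪ … ∪ Q_k. -/
/-!
Every connected component `Q` of the complement of `Z` is a tail. `Q` meets `Z` since `X` is
connected, and it meets only `Z`, by maximality of the component. If `Q` met `Z` along two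
different nodes `(i, j)` and `(i', j')`, then going from `j` to `j'` inside `Z`, across the node
`(j', i')` and back to `i` inside `Q` would avoid the node `(j, i)`, which is separating.
So `Q` meets its complement in exactly one node, which counts once because separating nodes
are simple. Hence `Zᶜ` is the disjoint union of these tails.
-/

open Finset

variable {V : Type*}

namespace SimpleGraph

theorem Reachable.deleteEdges_of_induce {G : SimpleGraph V} {s : Set V} {e : Sym2 V}
    (he : ∃ x ∈ e, x ∉ s) {a b : s} (h : (G.induce s).Reachable a b) :
    (G.deleteEdges {e}).Reachable a b := by
  have hle : G.induce s ≤ (G.deleteEdges {e}).induce s := by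
    intro a b hab
    refine (deleteEdges_adj ..).mpr ⟨hab, fun hab_e => ?_⟩
    obtain ⟨x, hx, hxs⟩ := he
    rw [← Set.mem_singleton_iff.mp hab_e, Sym2.mem_iff] at hx
    rcases hx with rfl | rfl
    exacts [hxs a.2, hxs b.2]
  exact (h.mono hle).map (Embedding.induce s).toHom

theorem eq_of_isBridge_of_reachable_induce_compl {G : SimpleGraph V} {Z : Set V}
    (hZ : (G.induce Z).Preconnected) {i i' : ↥Zᶜ} (hii' : (G.induce Zᶜ).Reachable i i')
    {j j' : V} (hj : j ∈ Z) (hj' : j' ∈ Z) (hbr : G.IsBridge s(j, i)) (hadj : G.Adj i' j') :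
    (i : V) = i' ∧ j = j' := by
  by_contra hne
  apply isBridge_iff.mp hbr
  have hjj' : (G.deleteEdges {s(j, i)}).Reachable j j' :=
    (hZ ⟨j, hj⟩ ⟨j', hj'⟩).deleteEdges_of_induce ⟨(i : V), Sym2.mem_mk_right _ _, i.2⟩
  have hj'i' : (G.deleteEdges {s(j, i)}).Adj j' i' := by
    refine (deleteEdges_adj ..).mpr ⟨hadj.symm, fun he => ?_⟩
    rcases Sym2.eq_iff.mp (Set.mem_singleton_iff.mp he) with ⟨rfl, hi⟩ | ⟨rfl, -⟩
    · exact hne ⟨hi.symm, rfl⟩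
    · exact i.2 hj'
  have hi'i : (G.deleteEdges {s(j, i)}).Reachable i' i :=
    hii'.symm.deleteEdges_of_induce ⟨j, Sym2.mem_mk_left _ _, not_not.mpr hj⟩
  exact hjj'.trans (hj'i'.reachable.trans hi'i)

namespace ConnectedComponent

variable [Fintype V] {G : SimpleGraph V} {s : Set V}

open Classical in
noncomputable def ambientSupp (C : (G.induce s).ConnectedComponent) : Finset V :=
  {v | ∃ hv : v ∈ s, (G.induce s).connectedComponentMk ⟨v, hv⟩ = C}

theorem mem_ambientSupp {C : (G.induce s).ConnectedComponent} {v : V} :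
    v ∈ C.ambientSupp ↔ ∃ hv : v ∈ s, (G.induce s).connectedComponentMk ⟨v, hv⟩ = C := by
  simp [ambientSupp]

theorem mem_of_mem_ambientSupp {C : (G.induce s).ConnectedComponent} {v : V}
    (hv : v ∈ C.ambientSupp) : v ∈ s :=
  (mem_ambientSupp.mp hv).1

theorem val_mem_ambientSupp_connectedComponentMk (a : s) :
    ↑a ∈ ((G.induce s).connectedComponentMk a).ambientSupp :=
  mem_ambientSupp.mpr ⟨a.2, rfl⟩

theorem ambientSupp_nonempty (C : (G.induce s).ConnectedComponent) : C.ambientSupp.Nonempty := by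
  induction C using ConnectedComponent.ind with
  | h a => exact ⟨a, val_mem_ambientSupp_connectedComponentMk a⟩

theorem disjoint_ambientSupp {C D : (G.induce s).ConnectedComponent} (hCD : C ≠ D) :
    Disjoint C.ambientSupp D.ambientSupp := by
  refine Finset.disjoint_left.mpr fun v hC hD => hCD ?_
  obtain ⟨-, rfl⟩ := mem_ambientSupp.mp hC
  obtain ⟨-, rfl⟩ := mem_ambientSupp.mp hD
  rfl

theorem reachable_of_mem_ambientSupp {C : (G.induce s).ConnectedComponent} {a b : s}
    (ha : ↑a ∈ C.ambientSupp) (hb : ↑b ∈ C.ambientSupp) : (G.induce s).Reachable a b :=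
  ConnectedComponent.exact ((mem_ambientSupp.mp ha).2.trans (mem_ambientSupp.mp hb).2.symm)

theorem mem_ambientSupp_of_adj {C : (G.induce s).ConnectedComponent} {v w : V}
    (hv : v ∈ C.ambientSupp) (hw : w ∈ s) (hvw : G.Adj v w) : w ∈ C.ambientSupp := by
  obtain ⟨hvs, rfl⟩ := mem_ambientSupp.mp hv
  refine mem_ambientSupp.mpr ⟨hw, ConnectedComponent.sound ?_⟩
  exact (show (G.induce s).Adj ⟨v, hvs⟩ ⟨w, hw⟩ from hvw).reachable.symm

end ConnectedComponent

end SimpleGraph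

open SimpleGraph

theorem kdeg_eq_one_of_unique_crossing [Fintype V] [DecidableEq V] {m : V → V → ℕ}
    {Q : Finset V} {i₀ j₀ : V} (hi₀ : i₀ ∈ Q) (hj₀ : j₀ ∉ Q) (hm : m i₀ j₀ = 1)
    (huniq : ∀ i ∈ Q, ∀ j ∉ Q, 0 < m i j → i = i₀ ∧ j = j₀) : kdeg m Q = 1 := by
  rw [kdeg, ← Finset.sum_product', Finset.sum_eq_single (i₀, j₀)]
  · exact hm
  · rintro ⟨i, j⟩ hij hne
    rw [Finset.mem_product, Finset.mem_compl] at hij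
    by_contra hpos
    obtain ⟨rfl, rfl⟩ := huniq i hij.1 j hij.2 (Nat.pos_of_ne_zero hpos)
    exact hne rfl
  · exact fun h => (h (Finset.mem_product.mpr ⟨hi₀, Finset.mem_compl.mpr hj₀⟩)).elim

theorem isTail_ambientSupp [Fintype V] [DecidableEq V]
    {m : V → V → ℕ} (hsym : ∀ i j, m i j = m j i)
    {G : SimpleGraph V} (hG : ∀ i j, G.Adj i j ↔ i ≠ j ∧ 0 < m i j) (hconn : G.Connected)
    {Z : Finset V} (hZne : Z.Nonempty) (hZconn : (G.induce (↑Z : Set V)).Preconnected)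
    (hsep : ∀ i ∈ Z, ∀ j, j ∉ Z → 0 < m i j → Separating m G i j)
    (C : (G.induce (↑Z : Set V)ᶜ).ConnectedComponent) : IsTail m C.ambientSupp := by
  set Q := C.ambientSupp
  have hQZ : ∀ {v}, v ∈ Q → v ∉ Z := fun hv => ConnectedComponent.mem_of_mem_ambientSupp hv
  have hleave : ∀ {i j : V}, i ∈ Q → j ∉ Q → 0 < m i j → G.Adj i j ∧ j ∈ Z := fun hi hj hm =>
    have hadj := (hG _ _).mpr ⟨fun h => hj (by rwa [← h]), hm⟩
    ⟨hadj, by_contra fun hjZ => hj (ConnectedComponent.mem_ambientSupp_of_adj hi hjZ hadj)⟩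
  obtain ⟨w, hw⟩ := C.ambientSupp_nonempty
  obtain ⟨z, hz⟩ := hZne
  obtain ⟨d, -, hd₁, hd₂⟩ :=
    (hconn.preconnected w z).some.exists_boundary_dart (↑Q : Set V) hw (fun h => hQZ h hz)
  have hm₀ : 0 < m d.fst d.snd := ((hG _ _).mp d.adj).2
  have hd₂Z : d.snd ∈ Z := (hleave hd₁ hd₂ hm₀).2
  refine ⟨⟨w, hw⟩, fun h => hQZ (h ▸ Finset.mem_univ z : z ∈ Q) hz, ?_⟩
  refine kdeg_eq_one_of_unique_crossing hd₁ hd₂ ?_ fun i hi j hj hm => ?_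
  · rw [hsym]
    exact (hsep _ hd₂Z _ (hQZ hd₁) (hsym _ _ ▸ hm₀)).1
  · obtain ⟨-, hjZ⟩ := hleave hi hj hm
    exact eq_of_isBridge_of_reachable_induce_compl (i := ⟨i, hQZ hi⟩) (i' := ⟨d.fst, hQZ hd₁⟩)
      hZconn (ConnectedComponent.reachable_of_mem_ambientSupp hi hd₁) hjZ hd₂Z
      (hsep j hjZ i (hQZ hi) (hsym i j ▸ hm)).2 d.adj

theorem connected_meets_in_sep_nodes_general [Fintype V] [DecidableEq V]
    (m : V → V → ℕ) (hsym : ∀ i j, m i j = m j i)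
    (G : SimpleGraph V) (hG : ∀ i j, G.Adj i j ↔ i ≠ j ∧ 0 < m i j)
    (hconn : G.Connected)
    (Z : Finset V) (hZne : Z.Nonempty)
    (hZconn : (G.induce (↑Z : Set V)).Connected)
    (hsep : ∀ i ∈ Z, ∀ j, j ∉ Z → 0 < m i j → Separating m G i j) :
    (∃ (k : ℕ) (Q : Fin k → Finset V), (∀ h, IsTail m (Q h)) ∧
        (∀ a b, a ≠ b → Disjoint (Q a) (Q b)) ∧ Z = Finset.univ.biUnion Q) ∨
    (∃ (k : ℕ) (Q : Fin k → Finset V), (∀ h, IsTail m (Q h)) ∧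
        (∀ a b, a ≠ b → Disjoint (Q a) (Q b)) ∧ Zᶜ = Finset.univ.biUnion Q) := by
  right
  obtain ⟨k, ⟨e⟩⟩ := Finite.exists_equiv_fin (G.induce (↑Z : Set V)ᶜ).ConnectedComponent
  refine ⟨k, fun h => (e.symm h).ambientSupp,
    fun h => isTail_ambientSupp hsym hG hconn hZne hZconn.preconnected hsep _,
    fun a b hab => ConnectedComponent.disjoint_ambientSupp (e.symm.injective.ne hab), ?_⟩
  ext v
  simp only [Finset.mem_compl, Finset.mem_biUnion, Finset.mem_univ, true_and]
  refine ⟨fun hv => ⟨e ((G.induce _).connectedComponentMk ⟨v, hv⟩), ?_⟩, fun ⟨h, hv⟩ => ?_⟩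
  · simpa using ConnectedComponent.val_mem_ambientSupp_connectedComponentMk (G := G) ⟨v, hv⟩
  · exact ConnectedComponent.mem_of_mem_ambientSupp hv

/-- Key step in the proof of Lemma 3.9: if a connected subcurve `Z` meets its complement
only in separating nodes, then `Z` or its complement is a disjoint union of tails. -/
theorem connected_meets_in_sep_nodes [Fintype V] [DecidableEq V] [Nonempty V]
    (m : V → V → ℕ) (hsym : ∀ i j, m i j = m j i) (hdiag : ∀ i, m i i = 0)
    (G : SimpleGraph V) (hG : ∀ i j, G.Adj i j ↔ i ≠ j ∧ 0 < m i j)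
    (hconn : G.Connected)
    (Z : Finset V) (hZne : Z.Nonempty) (hZu : Z ≠ Finset.univ)
    (hZconn : (G.induce (↑Z : Set V)).Connected)
    (hsep : ∀ i ∈ Z, ∀ j, j ∉ Z → 0 < m i j → Separating m G i j) :
    (∃ (k : ℕ) (Q : Fin k → Finset V), (∀ h, IsTail m (Q h)) ∧
        (∀ a b, a ≠ b → Disjoint (Q a) (Q b)) ∧ Z = Finset.univ.biUnion Q) ∨
    (∃ (k : ℕ) (Q : Fin k → Finset V), (∀ h, IsTail m (Q h)) ∧
        (∀ a b, a ≠ b → Disjoint (Q a) (Q b)) ∧ Zᶜ = Finset.univ.biUnion Q) :=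
  connected_meets_in_sep_nodes_general m hsym G hG hconn Z hZne hZconn hsep
end

section
/- Lemma 3.4, final assertion: let D : V → ℤ be a divisor with D i ≥ 0 for all i, let Z_0 = {i ∈ V : D i = 0}, and assume Z_0 is nonempty and Z_0 ≠ V; set m_1 = min{D i : D i > 0}. Then Σ_{j ∈ Z_0} (deg D) j ≥ m_1 · k_{Z_0} > 0. (The strict positivity uses connectedness of G, which forces k_{Z_0} > 0.) -/
open Finset

variable {V : Type*}

/-- Lemma 3.4, final assertion: `∑_{j ∈ Z_0} (deg D) j ≥ m_1 · k_{Z_0} > 0`. -/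
theorem degZ_strict [Fintype V] [DecidableEq V] [Nonempty V]
    (m : V → V → ℕ) (hsym : ∀ i j, m i j = m j i) (hdiag : ∀ i, m i i = 0)
    (G : SimpleGraph V) (hG : ∀ i j, G.Adj i j ↔ i ≠ j ∧ 0 < m i j)
    (hconn : G.Connected)
    (D : V → ℤ) (hD : ∀ i, 0 ≤ D i)
    (Z0 : Finset V) (hZ0 : Z0 = Finset.univ.filter (fun i => D i = 0))
    (hne : Z0.Nonempty) (hnu : Z0 ≠ Finset.univ)
    (m1 : ℤ) (hm1 : IsLeast {x : ℤ | 0 < x ∧ ∃ i, D i = x} m1) :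
    m1 * (kdeg m Z0 : ℤ) ≤ ∑ j ∈ Z0, mdeg m D j ∧ 0 < m1 * (kdeg m Z0 : ℤ) := by

  have hmem : ∀ i, i ∈ Z0 ↔ D i = 0 := by
    intro i; subst hZ0; simp
  have hDge : ∀ i, i ∉ Z0 → m1 ≤ D i := by
    intro i hi
    apply hm1.2
    exact ⟨lt_of_le_of_ne (hD i) (fun h => hi ((hmem i).2 h.symm)), i, rfl⟩
  have hm1pos : 0 < m1 := hm1.1.1
  -- rewrite the sum
  have hsum : ∑ j ∈ Z0, mdeg m D j = ∑ j ∈ Z0, ∑ i ∈ Z0ᶜ, D i * (m i j : ℤ) := by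
    apply Finset.sum_congr rfl
    intro j hj
    have hDj : D j = 0 := (hmem j).1 hj
    unfold mdeg
    rw [← Finset.sum_add_sum_compl Z0 (fun i => (D i - D j) * (m i j : ℤ))]
    have h1 : ∑ i ∈ Z0, (D i - D j) * (m i j : ℤ) = 0 := by
      apply Finset.sum_eq_zero
      intro i hi
      rw [(hmem i).1 hi, hDj]; ring
    rw [h1, zero_add]
    apply Finset.sum_congr rfl
    intro i _
    rw [hDj]; ring
  have hk : (kdeg m Z0 : ℤ) = ∑ j ∈ Z0, ∑ i ∈ Z0ᶜ, (m i j : ℤ) := by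
    unfold kdeg
    push_cast
    exact Finset.sum_congr rfl fun i _ => Finset.sum_congr rfl fun j _ => by rw [hsym]
  have hle : m1 * (kdeg m Z0 : ℤ) ≤ ∑ j ∈ Z0, mdeg m D j := by
    rw [hsum, hk, Finset.mul_sum]
    apply Finset.sum_le_sum
    intro j _
    rw [Finset.mul_sum]
    apply Finset.sum_le_sum
    intro i hi
    exact mul_le_mul_of_nonneg_right (hDge i (Finset.mem_compl.mp hi)) (by positivity)
  refine ⟨hle, ?_⟩
  -- positivity: find a crossing edge
  obtain ⟨a, ha⟩ := hne
  obtain ⟨b, hb⟩ : ∃ b, b ∉ Z0 := by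
    by_contra h
    push_neg at h
    exact hnu (Finset.eq_univ_iff_forall.mpr h)
  obtain ⟨p⟩ := hconn a b
  obtain ⟨d, _, hd1, hd2⟩ := p.exists_boundary_dart (↑Z0 : Set V) ha hb
  have hadj := d.adj
  have hmpos : 0 < m d.fst d.snd := ((hG _ _).1 hadj).2
  have hkpos : 0 < kdeg m Z0 := by
    unfold kdeg
    have : 0 < ∑ j ∈ Z0ᶜ, m d.fst j :=
      Finset.sum_pos' (fun _ _ => Nat.zero_le _)
        ⟨d.snd, Finset.mem_compl.mpr (by simpa using hd2), hmpos⟩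
    exact Finset.sum_pos' (fun _ _ => Nat.zero_le _) ⟨d.fst, by simpa using hd1, this⟩
  positivity
end

section
/- Induction step in the proof of the Main Theorem (the claim that d'' is partitional): let d ≥ 1 and let e, e' : V → ℕ with Σ_{i∈V} e i = Σ_{i∈V} e' i = d. Let D : V → ℤ be a divisor with D i ≥ 0 for all i, deg D = e − e', Z_0 = {i : D i = 0} nonempty and ≠ V, and m_1 = min{D i : D i > 0}. Then the function e'' := e + m_1 · deg(1_{Z_0}) (where 1_{Z_0} is the indicator function of Z_0) satisfies e'' j ≥ 0 for every j ∈ V and Σ_{j∈V} e'' j = d, i.e. e'' is again a partitional multidegree of total degree d. -/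
open Finset

variable {V : Type*}

/-- Induction step in the proof of the Main Theorem: `e'' = e + m_1 · deg(1_{Z_0})` is again
a partitional multidegree of total degree `d`. -/
theorem induction_step_partitional [Fintype V] [DecidableEq V] [Nonempty V]
    (m : V → V → ℕ) (hsym : ∀ i j, m i j = m j i) (hdiag : ∀ i, m i i = 0)
    (G : SimpleGraph V) (hG : ∀ i j, G.Adj i j ↔ i ≠ j ∧ 0 < m i j)
    (hconn : G.Connected) (d : ℕ) (hd : 1 ≤ d)
    (e e' : V → ℕ) (he : (∑ i, e i) = d) (he' : (∑ i, e' i) = d)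
    (D : V → ℤ) (hD : ∀ i, 0 ≤ D i)
    (hdeg : mdeg m D = fun i => (e i : ℤ) - (e' i : ℤ))
    (Z0 : Finset V) (hZ0 : Z0 = Finset.univ.filter (fun i => D i = 0))
    (hne : Z0.Nonempty) (hnu : Z0 ≠ Finset.univ)
    (m1 : ℤ) (hm1 : IsLeast {x : ℤ | 0 < x ∧ ∃ i, D i = x} m1) :
    (∀ j, 0 ≤ (e j : ℤ) + m1 * mdeg m (fun i => if i ∈ Z0 then 1 else 0) j) ∧
    (∑ j, ((e j : ℤ) + m1 * mdeg m (fun i => if i ∈ Z0 then 1 else 0) j)) = d := by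
  obtain ⟨⟨hm1pos, _⟩, hm1lb⟩ := hm1
  set ind : V → ℤ := fun i => if i ∈ Z0 then 1 else 0 with hind
  -- total sum of any mdeg vanishes
  have hsum0 : ∀ f : V → ℤ, ∑ j, mdeg m f j = 0 := by
    intro f
    have hkey : (∑ j, ∑ i, (f i - f j) * (m i j : ℤ))
        = ∑ j, ∑ i, -((f i - f j) * (m i j : ℤ)) := by
      rw [Finset.sum_comm]
      refine Finset.sum_congr rfl fun j _ => Finset.sum_congr rfl fun i _ => ?_
      rw [hsym i j]; ring
    have : (∑ j, mdeg m f j) = -∑ j, mdeg m f j := by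
      calc (∑ j, mdeg m f j) = ∑ j, ∑ i, (f i - f j) * (m i j : ℤ) := rfl
        _ = ∑ j, ∑ i, -((f i - f j) * (m i j : ℤ)) := hkey
        _ = -∑ j, ∑ i, (f i - f j) * (m i j : ℤ) := by
            simp [Finset.sum_neg_distrib]
        _ = -∑ j, mdeg m f j := rfl
    linarith
  have hDZ : ∀ i, i ∈ Z0 ↔ D i = 0 := by
    intro i; rw [hZ0]; simp
  have hDge : ∀ i, i ∉ Z0 → m1 ≤ D i := by
    intro i hi
    refine hm1lb ⟨?_, i, rfl⟩
    have := hD i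
    have : D i ≠ 0 := fun h => hi ((hDZ i).2 h)
    omega
  constructor
  · intro j
    by_cases hj : j ∈ Z0
    · have hDj : D j = 0 := (hDZ j).1 hj
      have hcomb : mdeg m D j + m1 * mdeg m ind j
          = ∑ i, ((D i - D j) * (m i j : ℤ) + m1 * ((ind i - ind j) * (m i j : ℤ))) := by
        simp [mdeg, Finset.mul_sum, Finset.sum_add_distrib]
      have hterm : 0 ≤ ∑ i, ((D i - D j) * (m i j : ℤ) + m1 * ((ind i - ind j) * (m i j : ℤ))) := by
        refine Finset.sum_nonneg fun i _ => ?_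
        by_cases hi : i ∈ Z0
        · have hDi : D i = 0 := (hDZ i).1 hi
          simp [hind, hi, hj, hDi, hDj]
        · have h1 : m1 ≤ D i := hDge i hi
          have h2 : (0 : ℤ) ≤ (m i j : ℤ) := Int.natCast_nonneg _
          simp only [hind, if_pos hj, if_neg hi]
          nlinarith
      rw [← hcomb] at hterm
      have hdj : mdeg m D j = (e j : ℤ) - (e' j : ℤ) := by rw [hdeg]
      have he'j : (0 : ℤ) ≤ (e' j : ℤ) := Int.natCast_nonneg _
      linarith [hterm, hdj ▸ hterm]
    · have hindj : ind j = 0 := by simp [hind, hj]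
      have hmd : 0 ≤ mdeg m ind j := by
        unfold mdeg
        refine Finset.sum_nonneg fun i _ => ?_
        rw [hindj]
        have h2 : (0 : ℤ) ≤ (m i j : ℤ) := Int.natCast_nonneg _
        by_cases hi : i ∈ Z0 <;> simp [hind, hi] <;> positivity
      have := Int.natCast_nonneg (e j)
      nlinarith
  · rw [Finset.sum_add_distrib, ← Finset.mul_sum, hsum0 ind]
    push_cast [← he]
    ring
end

section
/- Graph-theoretic step used in the proof of Corollary 3.10 ('b(S) = 0 iff Γ(S) is a tree iff S ⊆ X_sing^sep'): let D : V → ℤ be a divisor, and let c be the number of connected components of the graph on V in which distinct i, j are adjacent iff m i j > 0 and D i = D j. Then Σ_{{i,j} unordered, D i ≠ D j} m i j = c − 1 if and only if every pair (i, j) with m i j > 0 and D i ≠ D j is separating. (The left side is the cardinality of S(D), the set of nodes joining components with different coefficients of D.) -/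
/-
Let `S` be the graph of pairs `(i, j)` with `0 < m i j` and `D i ≠ D j`, so that `GD` is `G` with
the edges of `S` deleted. Deleting one edge from a finite graph adds one connected component if
the edge is a bridge and none otherwise; deleting the edges of `S` one at a time from the connected
graph `G`, starting with a non-bridge if there is one, shows `c ≤ 1 + #E(S)`, with equality iff
every edge of `S` is a bridge of `G`. On the other side the ordered double sum is at least
`2 #E(S)`, with equality iff `m i j = 1` on every edge of `S`. The sum equals `2 (c - 1)` exactly
when both inequalities are equalities.
-/

open Finset

variable {V : Type*}

theorem Nat.card_eq_card_add_one_of_surjective_of_injOn_compl {α β : Type*} [Finite α]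
    {f : α → β} (hf : Function.Surjective f) {x y : α} (hxy : x ≠ y) (hfxy : f x = f y)
    (hinj : Set.InjOn f {y}ᶜ) : Nat.card α = Nat.card β + 1 := by
  have hbij : Function.Bijective (({y}ᶜ : Set α).domRestrict f) := by
    refine ⟨hinj.injective, fun b => ?_⟩
    obtain ⟨a, rfl⟩ := hf b
    by_cases ha : a = y
    · subst ha; exact ⟨⟨x, hxy⟩, hfxy⟩
    · exact ⟨⟨a, ha⟩, rfl⟩
  rw [← Nat.card_eq_of_bijective _ hbij, Nat.card_coe_set_eq, ← Set.ncard_compl_add_ncard {y},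
    Set.ncard_singleton]

namespace SimpleGraph

variable {G : SimpleGraph V} {u v : V}

theorem Connected.card_connectedComponent (h : G.Connected) : Nat.card G.ConnectedComponent = 1 :=
  Nat.card_eq_one_iff_unique.mpr
    ⟨h.preconnected.subsingleton_connectedComponent, h.nonempty.map G.connectedComponentMk⟩

theorem reachable_deleteEdges_singleton_or_of_reachable {w x : V} (h : G.Reachable w x) :
    (G.deleteEdges {s(u, v)}).Reachable w x ∨
      ((G.deleteEdges {s(u, v)}).Reachable w u ∧ (G.deleteEdges {s(u, v)}).Reachable v x) ∨
      ((G.deleteEdges {s(u, v)}).Reachable w v ∧ (G.deleteEdges {s(u, v)}).Reachable u x) := by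
  obtain ⟨p⟩ := h
  induction p with
  | nil => exact Or.inl .rfl
  | @cons a b x hab p ih =>
    by_cases he : s(a, b) = s(u, v)
    · rcases Sym2.eq_iff.mp he with ⟨rfl, rfl⟩ | ⟨rfl, rfl⟩
      · rcases ih with h | ⟨-, h⟩ | ⟨-, h⟩
        · exact Or.inr (Or.inl ⟨.rfl, h⟩)
        · exact Or.inr (Or.inl ⟨.rfl, h⟩)
        · exact Or.inl h
      · rcases ih with h | ⟨-, h⟩ | ⟨-, h⟩
        · exact Or.inr (Or.inr ⟨.rfl, h⟩)
        · exact Or.inl h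
        · exact Or.inr (Or.inr ⟨.rfl, h⟩)
    · have hab' : (G.deleteEdges {s(u, v)}).Reachable a b :=
        (deleteEdges_adj.mpr ⟨hab, he⟩).reachable
      rcases ih with h | ⟨h₁, h₂⟩ | ⟨h₁, h₂⟩
      · exact Or.inl (hab'.trans h)
      · exact Or.inr (Or.inl ⟨hab'.trans h₁, h₂⟩)
      · exact Or.inr (Or.inr ⟨hab'.trans h₁, h₂⟩)

theorem card_connectedComponent_deleteEdges_of_not_isBridge [Finite V]
    (h : ¬G.IsBridge s(u, v)) :
    Nat.card (G.deleteEdges {s(u, v)}).ConnectedComponent = Nat.card G.ConnectedComponent := by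
  set H := G.deleteEdges {s(u, v)}
  have huv : H.Reachable u v := not_not.mp h
  refine Nat.card_eq_of_bijective (ConnectedComponent.map (Hom.ofLE (deleteEdges_le _)))
    ⟨ConnectedComponent.ind₂ fun w x hwx => ?_, ConnectedComponent.surjective_map_ofLE _⟩
  refine ConnectedComponent.sound ?_
  rcases reachable_deleteEdges_singleton_or_of_reachable (ConnectedComponent.exact hwx) with
    h | ⟨h₁, h₂⟩ | ⟨h₁, h₂⟩
  · exact h
  · exact h₁.trans (huv.trans h₂)
  · exact h₁.trans (huv.symm.trans h₂)

theorem card_connectedComponent_deleteEdges_of_isBridge [Finite V] (hadj : G.Adj u v)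
    (h : G.IsBridge s(u, v)) :
    Nat.card (G.deleteEdges {s(u, v)}).ConnectedComponent = Nat.card G.ConnectedComponent + 1 := by
  set H := G.deleteEdges {s(u, v)}
  refine Nat.card_eq_card_add_one_of_surjective_of_injOn_compl
    (ConnectedComponent.surjective_map_ofLE (deleteEdges_le _)) (x := H.connectedComponentMk u)
    (y := H.connectedComponentMk v) (fun huv => h (ConnectedComponent.exact huv))
    (ConnectedComponent.sound hadj.reachable) ?_
  rintro ⟨w⟩ hw ⟨x⟩ hx hwx
  refine ConnectedComponent.sound ?_
  rcases reachable_deleteEdges_singleton_or_of_reachable (ConnectedComponent.exact hwx) with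
    h | ⟨-, h⟩ | ⟨h, -⟩
  · exact h
  · exact absurd (ConnectedComponent.sound h.symm) hx
  · exact absurd (ConnectedComponent.sound h) hw

theorem card_connectedComponent_deleteEdges_singleton_le [Finite V] (e : Sym2 V) :
    Nat.card (G.deleteEdges {e}).ConnectedComponent ≤ Nat.card G.ConnectedComponent + 1 := by
  induction e using Sym2.ind with | _ u v =>
  by_cases hbr : G.IsBridge s(u, v)
  · by_cases hadj : G.Adj u v
    · exact (card_connectedComponent_deleteEdges_of_isBridge hadj hbr).le
    · rw [deleteEdges_eq_self.mpr (by simpa using hadj)]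
      omega
  · rw [card_connectedComponent_deleteEdges_of_not_isBridge hbr]
    omega

lemma deleteEdges_coe_insert [DecidableEq V] (e : Sym2 V) (S : Finset (Sym2 V)) :
    G.deleteEdges ↑(insert e S) = (G.deleteEdges {e}).deleteEdges ↑S := by
  rw [deleteEdges_deleteEdges, coe_insert, Set.insert_eq]

theorem card_connectedComponent_deleteEdges_le [Finite V] (S : Finset (Sym2 V)) :
    Nat.card (G.deleteEdges ↑S).ConnectedComponent ≤ Nat.card G.ConnectedComponent + #S := by
  classical
  induction S using Finset.induction_on generalizing G with
  | empty => simp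
  | insert e S he ih =>
    rw [deleteEdges_coe_insert, card_insert_of_notMem he]
    have := card_connectedComponent_deleteEdges_singleton_le (G := G) e
    grind

theorem card_connectedComponent_deleteEdges_of_forall_isBridge [Finite V] {S : Finset (Sym2 V)}
    (hS : ↑S ⊆ G.edgeSet) (hbr : ∀ e ∈ S, G.IsBridge e) :
    Nat.card (G.deleteEdges ↑S).ConnectedComponent = Nat.card G.ConnectedComponent + #S := by
  classical
  induction S using Finset.induction_on generalizing G with
  | empty => simp
  | insert e S he ih =>
    rw [coe_insert, Set.insert_subset_iff] at hS
    have hS' : ↑S ⊆ (G.deleteEdges {e}).edgeSet := by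
      rw [edgeSet_deleteEdges]
      exact Set.subset_sdiff_singleton hS.2 he
    have hbr' : ∀ f ∈ S, (G.deleteEdges {e}).IsBridge f :=
      fun f hf => (hbr f (mem_insert_of_mem hf)).anti (deleteEdges_le _)
    induction e using Sym2.ind with | _ u v =>
    rw [deleteEdges_coe_insert, card_insert_of_notMem he, ih hS' hbr',
      card_connectedComponent_deleteEdges_of_isBridge hS.1 (hbr _ (mem_insert_self _ _))]
    ring

theorem card_connectedComponent_deleteEdges_eq_iff [Finite V] {S : Finset (Sym2 V)}
    (hS : ↑S ⊆ G.edgeSet) :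
    Nat.card (G.deleteEdges ↑S).ConnectedComponent = Nat.card G.ConnectedComponent + #S ↔
      ∀ e ∈ S, G.IsBridge e := by
  classical
  refine ⟨fun h e he => ?_, card_connectedComponent_deleteEdges_of_forall_isBridge hS⟩
  by_contra hbr
  induction e using Sym2.ind with | _ u v =>
  rw [← insert_erase he, deleteEdges_coe_insert, card_insert_of_notMem (notMem_erase _ _),
    ← card_connectedComponent_deleteEdges_of_not_isBridge hbr] at h
  have := card_connectedComponent_deleteEdges_le (G := G.deleteEdges {s(u, v)}) (S.erase s(u, v))
  omega

section DoubleCounting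

variable [Fintype V] (H : SimpleGraph V) [DecidableRel H.Adj]

theorem two_mul_card_edgeFinset_eq_sum :
    2 * #H.edgeFinset = ∑ i, ∑ j, if H.Adj i j then 1 else 0 := by
  rw [two_mul_card_edgeFinset, card_filter, ← Fintype.sum_prod_type']

variable {H} {w : V → V → ℕ}

theorem two_mul_card_edgeFinset_le_sum (hw : ∀ i j, H.Adj i j → 0 < w i j) :
    2 * #H.edgeFinset ≤ ∑ i, ∑ j, if H.Adj i j then w i j else 0 := by
  rw [two_mul_card_edgeFinset_eq_sum]
  gcongr with i _ j _
  split_ifs with h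
  · exact hw i j h
  · rfl

theorem two_mul_card_edgeFinset_eq_sum_iff (hw : ∀ i j, H.Adj i j → 0 < w i j) :
    2 * #H.edgeFinset = ∑ i, ∑ j, (if H.Adj i j then w i j else 0) ↔
      ∀ i j, H.Adj i j → w i j = 1 := by
  rw [two_mul_card_edgeFinset_eq_sum, ← Fintype.sum_prod_type', ← Fintype.sum_prod_type',
    Finset.sum_eq_sum_iff_of_le fun p _ => ?le]
  · simp only [mem_univ, true_implies, Prod.forall]
    refine forall₂_congr fun i j => ?_
    split_ifs with h
    · simp [h, eq_comm]
    · simp [h]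
  case le =>
    split_ifs with h
    · exact hw _ _ h
    · rfl

end DoubleCounting

end SimpleGraph

open SimpleGraph in
theorem betti_zero_iff_separating_general [Fintype V]
    (m : V → V → ℕ) (hsym : ∀ i j, m i j = m j i)
    (G : SimpleGraph V) (hG : ∀ i j, G.Adj i j ↔ i ≠ j ∧ 0 < m i j)
    (hconn : G.Connected) (D : V → ℤ)
    (GD : SimpleGraph V) (hGD : ∀ i j, GD.Adj i j ↔ i ≠ j ∧ 0 < m i j ∧ D i = D j)
    (c : ℕ) (hc : c = Nat.card GD.ConnectedComponent) :
    ((∑ i, ∑ j, if D i ≠ D j then (m i j) else 0 : ℕ) : ℤ) = 2 * ((c : ℤ) - 1) ↔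
      ∀ i j, 0 < m i j → D i ≠ D j → Separating m G i j := by
  classical
  obtain ⟨S, hS⟩ : ∃ S : SimpleGraph V, ∀ i j, S.Adj i j ↔ 0 < m i j ∧ D i ≠ D j :=
    ⟨{ Adj i j := 0 < m i j ∧ D i ≠ D j
       symm := ⟨fun i j h => ⟨hsym i j ▸ h.1, h.2.symm⟩⟩
       loopless := ⟨fun i h => h.2 rfl⟩ }, fun _ _ => Iff.rfl⟩
  have hpos : ∀ i j, S.Adj i j → 0 < m i j := fun i j h => ((hS i j).1 h).1
  have hSG : S.edgeSet ⊆ G.edgeSet := edgeSet_mono fun i j h => (hG i j).2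
    ⟨fun hij => ((hS i j).1 h).2 (congrArg D hij), ((hS i j).1 h).1⟩
  have hGD : GD = G.deleteEdges S.edgeSet := by
    ext i j
    simp only [hGD, deleteEdges_adj, hG, mem_edgeSet, hS]
    tauto
  have hsum : (∑ i, ∑ j, if D i ≠ D j then m i j else 0) =
      ∑ i, ∑ j, if S.Adj i j then m i j else 0 := by
    refine sum_congr rfl fun i _ => sum_congr rfl fun j _ => ?_
    by_cases hm : m i j = 0 <;> simp [hS, hm, Nat.pos_of_ne_zero]
  have hcard := card_connectedComponent_deleteEdges_le (G := G) S.edgeFinset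
  have hbridge := card_connectedComponent_deleteEdges_eq_iff (G := G) (S := S.edgeFinset)
    (by rwa [coe_edgeFinset])
  rw [coe_edgeFinset, ← hGD, ← hc, hconn.card_connectedComponent] at hcard hbridge
  have hle := two_mul_card_edgeFinset_le_sum hpos
  rw [hsum]
  calc _ ↔ 2 * #S.edgeFinset = (∑ i, ∑ j, if S.Adj i j then m i j else 0) ∧
        c = 1 + #S.edgeFinset := by omega
    _ ↔ _ := by
      rw [two_mul_card_edgeFinset_eq_sum_iff hpos, hbridge]
      simp only [Separating, Sym2.forall, mem_edgeFinset, mem_edgeSet, hS]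
      grind

/-- Graph-theoretic step in Corollary 3.10: `#S(D) = c − 1` (i.e. `Γ(S)` is a tree, where `c`
is the number of level components) iff every node in `S(D)` is separating. The ordered double
sum counts each node of `S(D)` twice. -/
theorem betti_zero_iff_separating [Fintype V] [DecidableEq V] [Nonempty V]
    (m : V → V → ℕ) (hsym : ∀ i j, m i j = m j i) (hdiag : ∀ i, m i i = 0)
    (G : SimpleGraph V) (hG : ∀ i j, G.Adj i j ↔ i ≠ j ∧ 0 < m i j)
    (hconn : G.Connected) (D : V → ℤ)
    (GD : SimpleGraph V) (hGD : ∀ i j, GD.Adj i j ↔ i ≠ j ∧ 0 < m i j ∧ D i = D j)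
    (c : ℕ) (hc : c = Nat.card GD.ConnectedComponent) :
    ((∑ i, ∑ j, if D i ≠ D j then (m i j) else 0 : ℕ) : ℤ) = 2 * ((c : ℤ) - 1) ↔
      ∀ i j, 0 < m i j → D i ≠ D j → Separating m G i j :=
  betti_zero_iff_separating_general m hsym G hG hconn D GD hGD c hc
end

section
/- Remark 1.4 (equivalence of the two definitions of essential connectivity, (ec) and (ec2)): the infimum in ℕ ∪ {∞} of k_Z over all nonempty proper subsets Z ⊆ V such that NO pair (i, j) with i ∈ Z, j ∉ Z and m i j > 0 is separating, equals the infimum of k_Z over all nonempty proper subsets Z ⊆ V such that SOME pair (i, j) with i ∈ Z, j ∉ Z and m i j > 0 is not separating (both infima taken with inf ∅ = ∞). -/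
open Finset

variable {V : Type*}

/-! If `Z` meets its complement in a non-separating node and also in a separating node `{i, j}`
with `i ∈ Z`, let `C` be the side of the bridge `{i, j}` containing `j`. Since `{i, j}` is the only
node leaving `C`, each of `Z ∩ C` and `Z ∪ C` meets its complement only in nodes where `Z` does,
and not in `{i, j}`; the non-separating node stays on the boundary of one of them. Repeating this
strictly decreases `k_Z`, so the infimum (ec) is at most (ec2). Conversely, `G` being connected,
every nonempty proper `Z` meets its complement in some node, so the index set of (ec) is
contained in that of (ec2). -/

namespace SimpleGraph

variable {G : SimpleGraph V}

theorem Connected.exists_adj_mem_notMem (hG : G.Connected) {S : Set V} {u v : V}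
    (hu : u ∈ S) (hv : v ∉ S) : ∃ a ∈ S, ∃ b ∉ S, G.Adj a b := by
  obtain ⟨d, -, hd₁, hd₂⟩ := (hG.preconnected u v).some.exists_boundary_dart S hu hv
  exact ⟨d.fst, hd₁, d.snd, hd₂, d.adj⟩

theorem IsBridge.exists_side {i j : V} (h : G.IsBridge s(i, j)) :
    ∃ C : Set V, j ∈ C ∧ i ∉ C ∧ ∀ a ∈ C, ∀ b ∉ C, G.Adj a b → a = j ∧ b = i := by
  refine ⟨{v | (G.deleteEdges {s(i, j)}).Reachable j v}, Reachable.refl j,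
    fun hi => isBridge_iff.1 h hi.symm, fun a ha b hb hab => ?_⟩
  by_cases he : s(a, b) = s(i, j)
  · rcases Sym2.eq_iff.1 he with ⟨rfl, -⟩ | hab'
    · exact absurd ha fun hi => isBridge_iff.1 h hi.symm
    · exact hab'
  · exact absurd (ha.trans (deleteEdges_adj.2 ⟨hab, he⟩).reachable) hb

end SimpleGraph

section

variable [Fintype V] [DecidableEq V]

theorem kdeg_eq_sum_filter (m : V → V → ℕ) (Z : Finset V) :
    kdeg m Z = ∑ p ∈ (Z ×ˢ Zᶜ).filter (fun p => m p.1 p.2 ≠ 0), m p.1 p.2 := by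
  rw [Finset.sum_filter_ne_zero, kdeg, Finset.sum_product]

theorem kdeg_lt_of_crossing_subset {m : V → V → ℕ} {Z W : Finset V}
    (hsub : ∀ a ∈ W, ∀ b ∉ W, 0 < m a b → a ∈ Z ∧ b ∉ Z) {i j : V} (hi : i ∈ Z) (hj : j ∉ Z)
    (hij : 0 < m i j) (hW : i ∈ W → j ∈ W) : kdeg m W < kdeg m Z := by
  rw [kdeg_eq_sum_filter, kdeg_eq_sum_filter]
  refine sum_lt_sum_of_subset (i := (i, j)) ?_ ?_ ?_ hij fun _ _ _ => Nat.zero_le _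
  · intro p hp
    simp only [mem_filter, mem_product, mem_compl] at hp ⊢
    exact ⟨hsub _ hp.1.1 _ hp.1.2 (Nat.pos_of_ne_zero hp.2), hp.2⟩
  · simpa [hi, hj] using hij.ne'
  · simpa using fun h hjW => absurd (hW h) hjW

variable {m : V → V → ℕ} {G : SimpleGraph V}

theorem exists_kdeg_lt_of_separating (hG : ∀ i j, G.Adj i j ↔ i ≠ j ∧ 0 < m i j) {Z : Finset V}
    {i₀ j₀ i j : V} (hi₀ : i₀ ∈ Z) (hj₀ : j₀ ∉ Z) (hm₀ : 0 < m i₀ j₀)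
    (hns : ¬ Separating m G i₀ j₀) (hi : i ∈ Z) (hj : j ∉ Z) (hsep : Separating m G i j) :
    ∃ W : Finset V, i₀ ∈ W ∧ j₀ ∉ W ∧ kdeg m W < kdeg m Z := by
  classical
  obtain ⟨C, hjC, hiC, hC⟩ := hsep.2.exists_side
  have hmij : 0 < m i j := hsep.1 ▸ Nat.one_pos
  have hadj {a b : V} {W : Finset V} (ha : a ∈ W) (hb : b ∉ W) (hab : 0 < m a b) : G.Adj a b :=
    (hG a b).2 ⟨ne_of_mem_of_not_mem ha hb, hab⟩
  have hi₀C (hj₀C : j₀ ∈ C) : i₀ ∈ C := by_contra fun h => by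
    obtain ⟨rfl, rfl⟩ := hC j₀ hj₀C i₀ h (hadj hi₀ hj₀ hm₀).symm
    exact hns hsep
  by_cases hj₀C : j₀ ∈ C
  · refine ⟨Z ∩ C.toFinset, by simp [hi₀, hi₀C hj₀C], by simp [hj₀], ?_⟩
    refine kdeg_lt_of_crossing_subset (fun a ha b hb hab => ?_) hi hj hmij (by simp [hiC])
    have hab := hadj ha hb hab
    simp only [mem_inter, Set.mem_toFinset, not_and] at ha hb
    exact ⟨ha.1, fun hbZ => hj ((hC a ha.2 b (hb hbZ) hab).1 ▸ ha.1)⟩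
  · refine ⟨Z ∪ C.toFinset, by simp [hi₀], by simp [hj₀, hj₀C], ?_⟩
    refine kdeg_lt_of_crossing_subset (fun a ha b hb hab => ?_) hi hj hmij fun _ => by simp [hjC]
    have hab := hadj ha hb hab
    simp only [mem_union, Set.mem_toFinset, not_or] at ha hb
    exact ⟨ha.resolve_right fun haC => hb.1 ((hC a haC b hb.2 hab).2 ▸ hi), hb.1⟩

theorem exists_forall_not_separating_kdeg_le (hG : ∀ i j, G.Adj i j ↔ i ≠ j ∧ 0 < m i j)
    {Z : Finset V} (hZ : ∃ i ∈ Z, ∃ j, j ∉ Z ∧ 0 < m i j ∧ ¬ Separating m G i j) :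
    ∃ W : Finset V, W.Nonempty ∧ W ≠ univ ∧
      (∀ i ∈ W, ∀ j, j ∉ W → 0 < m i j → ¬ Separating m G i j) ∧ kdeg m W ≤ kdeg m Z := by
  induction hk : kdeg m Z using Nat.strong_induction_on generalizing Z with
  | _ k ih =>
    obtain ⟨i₀, hi₀, j₀, hj₀, hm₀, hns⟩ := hZ
    by_cases hall : ∀ i ∈ Z, ∀ j, j ∉ Z → 0 < m i j → ¬ Separating m G i j
    · exact ⟨Z, ⟨i₀, hi₀⟩, fun h => hj₀ (h ▸ mem_univ j₀), hall, hk.le⟩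
    push Not at hall
    obtain ⟨i, hi, j, hj, -, hsep⟩ := hall
    obtain ⟨W, hi₀W, hj₀W, hlt⟩ := exists_kdeg_lt_of_separating hG hi₀ hj₀ hm₀ hns hi hj hsep
    obtain ⟨W', hW'⟩ := ih _ (hk ▸ hlt) ⟨i₀, hi₀W, j₀, hj₀W, hm₀, hns⟩ rfl
    exact ⟨W', hW'.1, hW'.2.1, hW'.2.2.1, hW'.2.2.2.trans (hk ▸ hlt.le)⟩

end

theorem ec_eq_ec2_general [Fintype V] [DecidableEq V]
    (m : V → V → ℕ) (G : SimpleGraph V) (hG : ∀ i j, G.Adj i j ↔ i ≠ j ∧ 0 < m i j)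
    (hconn : G.Connected) :
    sInf ((fun Z : Finset V => (kdeg m Z : ℕ∞)) ''
      {Z | Z.Nonempty ∧ Z ≠ Finset.univ ∧
        ∀ i ∈ Z, ∀ j, j ∉ Z → 0 < m i j → ¬ Separating m G i j}) =
    sInf ((fun Z : Finset V => (kdeg m Z : ℕ∞)) ''
      {Z | Z.Nonempty ∧ Z ≠ Finset.univ ∧
        ∃ i ∈ Z, ∃ j, j ∉ Z ∧ 0 < m i j ∧ ¬ Separating m G i j}) := by
  refine le_antisymm (le_sInf ?_) (sInf_le_sInf (Set.image_mono ?_))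
  · rintro _ ⟨Z, ⟨-, -, hZ⟩, rfl⟩
    obtain ⟨W, hWne, hWu, hW, hle⟩ := exists_forall_not_separating_kdeg_le hG hZ
    exact sInf_le_of_le ⟨W, ⟨hWne, hWu, hW⟩, rfl⟩ (Nat.cast_le.2 hle)
  · rintro Z ⟨⟨u, hu⟩, hZu, hZ⟩
    obtain ⟨v, hv⟩ := not_forall.1 (hZu ∘ eq_univ_iff_forall.2)
    obtain ⟨i, hi, j, hj, hij⟩ := hconn.exists_adj_mem_notMem (S := ↑Z) hu hv
    exact ⟨⟨u, hu⟩, hZu, i, hi, j, hj, ((hG i j).1 hij).2, hZ i hi j hj ((hG i j).1 hij).2⟩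

/-- Remark 1.4, equivalence of the two definitions (ec) and (ec2) of essential connectivity:
the infimum of `k_Z` over `Z` with no separating node between `Z` and `Z'` equals the infimum
of `k_Z` over `Z` with some non-separating node between `Z` and `Z'`. -/
theorem ec_eq_ec2 [Fintype V] [DecidableEq V] [Nonempty V]
    (m : V → V → ℕ) (hsym : ∀ i j, m i j = m j i) (hdiag : ∀ i, m i i = 0)
    (G : SimpleGraph V) (hG : ∀ i j, G.Adj i j ↔ i ≠ j ∧ 0 < m i j)
    (hconn : G.Connected) :
    sInf ((fun Z : Finset V => (kdeg m Z : ℕ∞)) ''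
      {Z | Z.Nonempty ∧ Z ≠ Finset.univ ∧
        ∀ i ∈ Z, ∀ j, j ∉ Z → 0 < m i j → ¬ Separating m G i j}) =
    sInf ((fun Z : Finset V => (kdeg m Z : ℕ∞)) ''
      {Z | Z.Nonempty ∧ Z ≠ Finset.univ ∧
        ∃ i ∈ Z, ∃ j, j ∉ Z ∧ 0 < m i j ∧ ¬ Separating m G i j}) :=
  ec_eq_ec2_general m G hG hconn
end

section
/- Remark 1.4 (connected subcurves suffice to compute ε(X)): the essential connectivity ε(X) equals the infimum in ℕ ∪ {∞} of k_Z over all nonempty proper subsets Z ⊆ V such that the subgraph of G induced on Z is connected and some pair (i, j) with i ∈ Z, j ∉ Z and m i j > 0 is not separating. -/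
open Finset

variable {V : Type*}

/-!
Let `Z` be admissible for `ε(X)`, with a non-separating pair `(i, j)`, `i ∈ Z`, `j ∉ Z`. The
connected component `W` of `i` in the graph induced on `Z` keeps the pair `(i, j)`, and every node
leaving `W` also leaves `Z`, so `k_W ≤ k_Z`.
-/

theorem SimpleGraph.exists_connected_induce_adj_closed [Finite V] (G : SimpleGraph V)
    {Z : Finset V} {i : V} (hi : i ∈ Z) :
    ∃ W ⊆ Z, i ∈ W ∧ (G.induce (W : Set V)).Connected ∧
      ∀ a ∈ W, ∀ b ∈ Z, G.Adj a b → b ∈ W := by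
  classical
  obtain ⟨W, -, ⟨hWZ, hiW, hWconn⟩, hmax⟩ :=
    Finite.exists_le_maximal
      (p := fun W : Finset V => W ⊆ Z ∧ i ∈ W ∧ (G.induce (W : Set V)).Connected)
      (a := {i}) ⟨singleton_subset_iff.2 hi, mem_singleton_self i, by
        rw [coe_singleton]; exact .of_subsingleton⟩
  refine ⟨W, hWZ, hiW, hWconn, fun a ha b hb hab => ?_⟩
  have hconn : (G.induce (insert b W : Finset V)).Connected := by
    rw [coe_insert, Set.insert_eq, Set.union_comm]
    exact G.connected_induce_union hWconn.preconnected .of_subsingleton ha rfl hab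
  exact hmax ⟨insert_subset hb hWZ, mem_insert_of_mem hiW, hconn⟩ (subset_insert b W)
    (mem_insert_self b W)

theorem kdeg_le_kdeg_of_subset [Fintype V] [DecidableEq V] (m : V → V → ℕ) {W Z : Finset V}
    (hWZ : W ⊆ Z) (hzero : ∀ a ∈ W, ∀ b ∈ Z \ W, m a b = 0) : kdeg m W ≤ kdeg m Z := by
  have hinner : ∀ a ∈ W, ∑ b ∈ Wᶜ, m a b = ∑ b ∈ Zᶜ, m a b := fun a ha =>
    (sum_subset (compl_subset_compl.2 hWZ) fun b hbW hbZ =>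
      hzero a ha b (mem_sdiff.2 ⟨by simpa using hbZ, mem_compl.1 hbW⟩)).symm
  calc kdeg m W = ∑ a ∈ W, ∑ b ∈ Zᶜ, m a b := sum_congr rfl hinner
    _ ≤ kdeg m Z := sum_le_sum_of_subset hWZ

theorem eps_via_connected_subcurves_general [Fintype V] [DecidableEq V]
    (m : V → V → ℕ) (G : SimpleGraph V) (hG : ∀ i j, G.Adj i j ↔ i ≠ j ∧ 0 < m i j) :
    eps m G = sInf ((fun Z : Finset V => (kdeg m Z : ℕ∞)) ''
      {Z | Z.Nonempty ∧ Z ≠ Finset.univ ∧ (G.induce (↑Z : Set V)).Connected ∧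
        ∃ i ∈ Z, ∃ j, j ∉ Z ∧ 0 < m i j ∧ ¬ Separating m G i j}) := by
  refine le_antisymm (sInf_le_sInf (Set.image_mono fun Z hZ => ⟨hZ.1, hZ.2.1, hZ.2.2.2⟩))
    (le_sInf ?_)
  rintro _ ⟨Z, ⟨-, -, i, hi, j, hj, hmij, hnsep⟩, rfl⟩
  obtain ⟨W, hWZ, hiW, hWconn, hWclosed⟩ := G.exists_connected_induce_adj_closed hi
  have hjW : j ∉ W := fun h => hj (hWZ h)
  have hzero : ∀ a ∈ W, ∀ b ∈ Z \ W, m a b = 0 := by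
    intro a ha b hb
    obtain ⟨hbZ, hbW⟩ := mem_sdiff.1 hb
    by_contra hab
    have hadj : G.Adj a b := (hG a b).2 ⟨ne_of_mem_of_not_mem ha hbW, Nat.pos_of_ne_zero hab⟩
    exact hbW (hWclosed a ha b hbZ hadj)
  have hWne : W ≠ univ := fun h => hjW (h ▸ mem_univ j)
  exact le_trans
    (sInf_le ⟨W, ⟨⟨i, hiW⟩, hWne, hWconn, i, hiW, j, hjW, hmij, hnsep⟩, rfl⟩)
    (Nat.cast_le.mpr (kdeg_le_kdeg_of_subset m hWZ hzero))

/-- Remark 1.4: connected subcurves suffice to compute the essential connectivity `ε(X)`. -/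
theorem eps_via_connected_subcurves [Fintype V] [DecidableEq V] [Nonempty V]
    (m : V → V → ℕ) (hsym : ∀ i j, m i j = m j i) (hdiag : ∀ i, m i i = 0)
    (G : SimpleGraph V) (hG : ∀ i j, G.Adj i j ↔ i ≠ j ∧ 0 < m i j)
    (hconn : G.Connected) :
    eps m G = sInf ((fun Z : Finset V => (kdeg m Z : ℕ∞)) ''
      {Z | Z.Nonempty ∧ Z ≠ Finset.univ ∧ (G.induce (↑Z : Set V)).Connected ∧
        ∃ i ∈ Z, ∃ j, j ∉ Z ∧ 0 < m i j ∧ ¬ Separating m G i j}) :=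
  eps_via_connected_subcurves_general m G hG
end
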